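/- arXiv:2002.00546 — 3 statements merged into one kernel-verified Lean document; each statement's English description precedes it below -/
import Mathlib

section
/- Let (a_p) be a sequence of real numbers indexed by primes satisfying |a_p| ≤ 2, and set b_p = a_p² - 1 and c_p = a_p⁴ - 3a_p² + 1. Then for every prime p, |a_p| ≤ 11/10 - (57/1000)·c_p + (399/1000)·b_p, and consequently for any finite set S of primes, ∑_{p ∈ S} |a_p| ≤ ∑_{p ∈ S} (11/10 - (57/1000)·c_p + (399/1000)·b_p). -/
/-!
The majorant is even in `a_p`, so it suffices to bound `s = |a_p| ∈ [0, 2]`. There the difference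
`majorant - s = 161/250 - s + 57/100 s² - 57/1000 s⁴` is decreasing, with minimum `3/250` at `s = 2`:
the inequality is tight but strict at the Deligne bound. Summing over `S` is then termwise.
-/

lemma le_majorant_of_nonneg_of_le_two {s : ℝ} (h0 : 0 ≤ s) (h2 : s ≤ 2) :
    s ≤ 11/10 - 57/1000 * (s^4 - 3*s^2 + 1) + 399/1000 * (s^2 - 1) := by
  nlinarith [mul_nonneg h0 (sub_nonneg.2 h2), mul_nonneg (mul_nonneg h0 h0) (sub_nonneg.2 h2),
    sq_nonneg (s - 1)]

lemma abs_le_majorant_of_abs_le_two {x : ℝ} (hx : |x| ≤ 2) :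
    |x| ≤ 11/10 - 57/1000 * (x^4 - 3*x^2 + 1) + 399/1000 * (x^2 - 1) := by
  rw [← Even.pow_abs ⟨2, rfl⟩ x, ← sq_abs x]
  exact le_majorant_of_nonneg_of_le_two (abs_nonneg x) hx

theorem stmt_4 (a b c : ℕ → ℝ)
    (ha : ∀ p : ℕ, p.Prime → |a p| ≤ 2)
    (hb : ∀ p : ℕ, p.Prime → b p = (a p)^2 - 1)
    (hc : ∀ p : ℕ, p.Prime → c p = (a p)^4 - 3*(a p)^2 + 1) :
    (∀ p : ℕ, p.Prime → |a p| ≤ 11/10 - (57/1000) * c p + (399/1000) * b p) ∧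
    ∀ S : Finset ℕ, (∀ p ∈ S, p.Prime) →
      ∑ p ∈ S, |a p| ≤ ∑ p ∈ S, (11/10 - (57/1000) * c p + (399/1000) * b p) := by
  have pointwise : ∀ p : ℕ, p.Prime → |a p| ≤ 11/10 - (57/1000) * c p + (399/1000) * b p := by
    intro p hp
    rw [hb p hp, hc p hp]
    exact abs_le_majorant_of_abs_le_two (ha p hp)
  exact ⟨pointwise, fun S hS => Finset.sum_le_sum fun p hp => pointwise p (hS p hp)⟩
end

section
/- Let p ≥ 2 be a prime and let λf, λg be real numbers with |λg| ≤ 19/20 and |λf| ≤ 2. Suppose λF = λf + λg and λF2 = λf² + λg² + λf·λg - 2 - 1/p, and assume λF2 ≥ 0. Then λF² ≥ 2 + 1/p + λf·λg > 1/10, and in particular |λF| > 10^(-1/2). -/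
theorem one_div_sqrt_lt_abs_of_one_div_lt_sq {a x : ℝ} (ha : 0 ≤ a) (h : 1 / a < x ^ 2) :
    1 / √a < |x| := by
  rw [one_div, ← Real.sqrt_inv, ← Real.sqrt_sq_eq_abs, ← one_div]
  exact Real.sqrt_lt_sqrt (one_div_nonneg.mpr ha) h

theorem stmt_7 (p : ℕ) (hp : p.Prime) (lf lg lF lF2 : ℝ)
    (hg : |lg| ≤ 19/20) (hf : |lf| ≤ 2)
    (h1 : lF = lf + lg)
    (h2 : lF2 = lf^2 + lg^2 + lf * lg - 2 - 1/(p:ℝ))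
    (hpos : 0 ≤ lF2) :
    lF^2 ≥ 2 + 1/(p:ℝ) + lf * lg ∧ 2 + 1/(p:ℝ) + lf * lg > 1/10 ∧
      |lF| > 1 / Real.sqrt 10 := by
  have hp_inv : 0 < 1 / (p : ℝ) := one_div_pos.mpr (Nat.cast_pos.mpr hp.pos)
  have hprod : -(19/10) ≤ lf * lg := by
    have : |lf * lg| ≤ 2 * (19/20) := by
      rw [abs_mul]
      exact mul_le_mul hf hg (abs_nonneg _) zero_le_two
    linarith [neg_abs_le (lf * lg)]
  have hsq : lF^2 = lF2 + (2 + 1/(p:ℝ) + lf * lg) := by rw [h1, h2]; ring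
  have hbound : 2 + 1/(p:ℝ) + lf * lg > 1/10 := by linarith
  exact ⟨by linarith, hbound,
    one_div_sqrt_lt_abs_of_one_div_lt_sq (by norm_num) (by linarith)⟩
end

section
/- Let p ≥ 2 be a prime and λf, λg real numbers with |λg| ≤ 13/10 and |λf| ≤ 2, and suppose λF = λf + λg, λF2 = λf² + λg² + λf·λg - 2 - 1/p, λF ≥ 0, and λF2 ≥ 0. Then λF ≥ 1/10. -/
/-!
If `|λf| ≥ 14/10`, then `λF = λf + λg ≥ 0` with `|λg| ≤ 13/10` forces `λf ≥ 14/10` and hence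
`λF ≥ 1/10`. Otherwise `λF² = λF2 + 2 + 1/p + λf λg ≥ 2 - (14/10)(13/10) = 18/100`, so
`λF ≥ 3√2/10 > 1/10`.
-/

lemma neg_mul_le_mul_of_abs_le {a b A B : ℝ} (ha : |a| ≤ A) (hb : |b| ≤ B) : -(A * B) ≤ a * b := by
  have hab : |a * b| ≤ A * B := by
    rw [abs_mul]
    exact mul_le_mul ha hb (abs_nonneg b) ((abs_nonneg a).trans ha)
  linarith [neg_abs_le (a * b)]

theorem stmt_8_general (p : ℕ) (lf lg lF lF2 : ℝ)
    (hg : |lg| ≤ 13/10)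
    (h1 : lF = lf + lg)
    (h2 : lF2 = lf^2 + lg^2 + lf * lg - 2 - 1/(p:ℝ))
    (hFpos : 0 ≤ lF) (hpos : 0 ≤ lF2) :
    lF ≥ 1/10 := by
  obtain ⟨hlg_lower, hlg_upper⟩ := abs_le.mp hg
  rcases le_or_gt (14/10) |lf| with hlarge | hsmall
  · rcases le_abs'.mp hlarge with hneg | hbig <;> linarith
  · have hprod : -(14/10 * (13/10)) ≤ lf * lg := neg_mul_le_mul_of_abs_le hsmall.le hg
    have hsq : lF ^ 2 = lF2 + 2 + 1/(p:ℝ) + lf * lg := by rw [h1, h2]; ring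
    have hp_inv : 0 ≤ 1/(p:ℝ) := by positivity
    have hsq_lower : (1/10 : ℝ) ^ 2 ≤ lF ^ 2 := by linarith
    exact (sq_le_sq₀ (by norm_num) hFpos).1 hsq_lower

theorem stmt_8 (p : ℕ) (hp : p.Prime) (lf lg lF lF2 : ℝ)
    (hg : |lg| ≤ 13/10) (hf : |lf| ≤ 2)
    (h1 : lF = lf + lg)
    (h2 : lF2 = lf^2 + lg^2 + lf * lg - 2 - 1/(p:ℝ))
    (hFpos : 0 ≤ lF) (hpos : 0 ≤ lF2) :
    lF ≥ 1/10 :=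
  stmt_8_general p lf lg lF lF2 hg h1 h2 hFpos hpos
end
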